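/- arXiv:1406.6680 — 2 statements merged into one kernel-verified Lean document; each statement's English description precedes it below -/
import Mathlib

section
/- Let U be a two-dimensional update family and let u ∈ S¹ be a rational direction with α⁻(u) < ∞. Then there exists a finite set Z ⊆ ℓ_u⁺ such that ℓ_u⁻ ⊆ [H_u ∪ Z]. -/
open MeasureTheory Filter Set

namespace BP

/-- A site of the two-dimensional lattice `ℤ²`. -/
abbrev Site := ℤ × ℤ

/-- One step of the `U`-bootstrap process: a site becomes infected if some update rule,
translated by it, is already entirely infected. -/
def step (U : Finset (Finset Site)) (A : Set Site) : Set Site :=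
  A ∪ {x : Site | ∃ X ∈ U, ∀ y ∈ X, x + y ∈ A}

/-- The sets `A_t` of the `U`-bootstrap process. -/
def iter (U : Finset (Finset Site)) (A : Set Site) : ℕ → Set Site
  | 0 => A
  | t + 1 => step U (iter U A t)

/-- The closure `[A]` of `A` under the `U`-bootstrap process. -/
def bclosure (U : Finset (Finset Site)) (A : Set Site) : Set Site :=
  ⋃ t : ℕ, iter U A t

/-- The inner product of a site with a real vector. -/
noncomputable def ip (x : Site) (u : ℝ × ℝ) : ℝ := (x.1 : ℝ) * u.1 + (x.2 : ℝ) * u.2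

/-- The inner product of two real vectors. -/
noncomputable def ipR (v w : ℝ × ℝ) : ℝ := v.1 * w.1 + v.2 * w.2

/-- `u` is a unit vector, i.e. an element of `S¹`. -/
def unitVec (u : ℝ × ℝ) : Prop := u.1 ^ 2 + u.2 ^ 2 = 1

/-- The discrete half-plane `H_u = {x : ⟨x,u⟩ < 0}`. -/
def halfPlane (u : ℝ × ℝ) : Set Site := {x : Site | ip x u < 0}

/-- `u` is a stable direction for `U`: the half-plane `H_u` is closed under the process. -/
def IsStable (U : Finset (Finset Site)) (u : ℝ × ℝ) : Prop :=
  bclosure U (halfPlane u) = halfPlane u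

/-- The stable set `S = S(U)`, as a set of unit vectors. -/
def stableSet (U : Finset (Finset Site)) : Set (ℝ × ℝ) :=
  {u | unitVec u ∧ IsStable U u}

/-- The discrete line `ℓ_u` through the origin perpendicular to `u`. -/
def line (u : ℝ × ℝ) : Set Site := {x | ip x u = 0}

/-- The perpendicular vector pointing to the right as one looks in the direction `u`. -/
def rightPerp (u : ℝ × ℝ) : ℝ × ℝ := (u.2, -u.1)

/-- `ℓ_u⁺`: the origin together with the sites of `ℓ_u` to the right of the origin
(as one looks in the direction `u`). -/
def linePlus (u : ℝ × ℝ) : Set Site := {x | ip x u = 0 ∧ 0 ≤ ip x (rightPerp u)}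

/-- `ℓ_u⁻`: the origin together with the sites of `ℓ_u` to the left of the origin. -/
def lineMinus (u : ℝ × ℝ) : Set Site := {x | ip x u = 0 ∧ ip x (rightPerp u) ≤ 0}

/-- `α⁺(u)`: the minimum cardinality of a finite set `Z ⊆ ℤ²` such that `[H_u ∪ Z]`
contains infinitely many sites of `ℓ_u⁺` (and `⊤ = ∞` if there is no such set). -/
noncomputable def alphaPlus (U : Finset (Finset Site)) (u : ℝ × ℝ) : ℕ∞ :=
  sInf {n : ℕ∞ | ∃ Z : Finset Site, (Z.card : ℕ∞) = n ∧
    (bclosure U (halfPlane u ∪ ↑Z) ∩ linePlus u).Infinite}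

/-- `α⁻(u)`: as `α⁺(u)`, but for `ℓ_u⁻`. -/
noncomputable def alphaMinus (U : Finset (Finset Site)) (u : ℝ × ℝ) : ℕ∞ :=
  sInf {n : ℕ∞ | ∃ Z : Finset Site, (Z.card : ℕ∞) = n ∧
    (bclosure U (halfPlane u ∪ ↑Z) ∩ lineMinus u).Infinite}

/-- The difficulty `α(u)` of a direction `u`: `min {α⁺(u), α⁻(u)}` if both are finite,
and `∞` otherwise. -/
noncomputable def difficulty (U : Finset (Finset Site)) (u : ℝ × ℝ) : ℕ∞ :=
  if alphaPlus U u ≠ ⊤ ∧ alphaMinus U u ≠ ⊤ then min (alphaPlus U u) (alphaMinus U u)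
  else ⊤

/-- `ᾱ(u) = min {α⁺(u), α⁻(u)}`. -/
noncomputable def alphaBar (U : Finset (Finset Site)) (u : ℝ × ℝ) : ℕ∞ :=
  min (alphaPlus U u) (alphaMinus U u)

/-- The difficulty `α = α(U)` of the update family `U`: the minimum over open
semicircles `C` of the maximum of `α(u)` over `u ∈ C`.  (An open semicircle is
parametrised by its midpoint `w`.) -/
noncomputable def famDifficulty (U : Finset (Finset Site)) : ℕ∞ :=
  ⨅ (w : ℝ × ℝ) (_ : unitVec w),
    ⨆ (u : ℝ × ℝ) (_ : unitVec u) (_ : 0 < ipR u w), difficulty U u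

/-- `U` is critical: some (closed) semicircle has finite intersection with the stable
set, and every open semicircle meets the stable set. -/
def Critical (U : Finset (Finset Site)) : Prop :=
  (∃ w : ℝ × ℝ, unitVec w ∧ (stableSet U ∩ {u | 0 ≤ ipR u w}).Finite) ∧
  (∀ w : ℝ × ℝ, unitVec w → (stableSet U ∩ {u | 0 < ipR u w}).Nonempty)

/-- The balancedness condition: some closed semicircle `C` has `α(u) ≤ α(U)`
for every `u ∈ C`.  A critical family is balanced iff this holds, unbalanced otherwise. -/
def BalancedCond (U : Finset (Finset Site)) : Prop :=
  ∃ w : ℝ × ℝ, unitVec w ∧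
    ∀ u : ℝ × ℝ, unitVec u → 0 ≤ ipR u w → difficulty U u ≤ famDifficulty U

/-- The time `τ` at which the origin is infected (`⊤ = ∞` if it never is). -/
noncomputable def tau (U : Finset (Finset Site)) (A : Set Site) : ℕ∞ :=
  ⨅ (t : ℕ) (_ : (0 : Site) ∈ iter U A t), (t : ℕ∞)

/-- Configurations of initially infected sites in the plane. -/
abbrev Config := Site → Bool

/-- The set of initially infected sites of a configuration. -/
def initSet (ω : Config) : Set Site := {x | ω x = true}

/-- `μ` is the product Bernoulli(`p`) measure (law of a "`p`-random set"): a probability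
measure giving every cylinder event its product probability. -/
def IsBernoulliProduct {ι : Type*} (p : ℝ) (μ : Measure (ι → Bool)) : Prop :=
  IsProbabilityMeasure μ ∧
    ∀ S : Finset ι, ∀ f : ι → Bool,
      μ {ω | ∀ x ∈ S, ω x = f x} =
        ∏ x ∈ S, if f x then ENNReal.ofReal p else ENNReal.ofReal (1 - p)

/-- Reduction of a site modulo `n`, giving a point of the torus `ℤ_n²`. -/
def projT (n : ℕ) (y : Site) : ZMod n × ZMod n := ((y.1 : ZMod n), (y.2 : ZMod n))

/-- One step of the `U`-bootstrap process on the torus `ℤ_n²`. -/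
def stepT (n : ℕ) (U : Finset (Finset Site)) (A : Set (ZMod n × ZMod n)) :
    Set (ZMod n × ZMod n) :=
  A ∪ {x | ∃ X ∈ U, ∀ y ∈ X, x + projT n y ∈ A}

/-- The sets `A_t` of the `U`-bootstrap process on the torus. -/
def iterT (n : ℕ) (U : Finset (Finset Site)) (A : Set (ZMod n × ZMod n)) :
    ℕ → Set (ZMod n × ZMod n)
  | 0 => A
  | t + 1 => stepT n U (iterT n U A t)

/-- The closure of `A` under the `U`-bootstrap process on the torus. -/
def bclosureT (n : ℕ) (U : Finset (Finset Site)) (A : Set (ZMod n × ZMod n)) :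
    Set (ZMod n × ZMod n) :=
  ⋃ t : ℕ, iterT n U A t

/-- `A` percolates on the torus `ℤ_n²`. -/
def PercolatesT (n : ℕ) (U : Finset (Finset Site)) (A : Set (ZMod n × ZMod n)) : Prop :=
  bclosureT n U A = Set.univ

/-- The critical probability `p_c(ℤ_n², U)`, where `P` is the family of product
Bernoulli measures on subsets of the torus. -/
noncomputable def pcT (n : ℕ) (U : Finset (Finset Site))
    (P : ℝ → Measure ((ZMod n × ZMod n) → Bool)) : ℝ :=
  sInf {p : ℝ | p ∈ Set.Icc (0 : ℝ) 1 ∧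
    1 / 2 ≤ P p {ω | PercolatesT n U {x | ω x = true}}}

/-- The Euclidean (`ℓ₂`) distance between two sites. -/
noncomputable def dist2 (x y : Site) : ℝ :=
  Real.sqrt ((((x.1 - y.1 : ℤ) : ℝ)) ^ 2 + (((x.2 - y.2 : ℤ) : ℝ)) ^ 2)

/-- A set of sites is (strongly) connected in the graph `G_κ` joining sites at
Euclidean distance at most `κ`. -/
def Conn (κ : ℝ) (S : Set Site) : Prop :=
  ∀ x ∈ S, ∀ y ∈ S,
    Relation.ReflTransGen (fun a b : Site => b ∈ S ∧ dist2 a b ≤ κ) x y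

/-- The range `ν` of the update family:
`ν = max {‖x − y‖₂ : x, y ∈ X ∪ {0}, X ∈ U}`. -/
noncomputable def nu (U : Finset (Finset Site)) : ℝ :=
  sSup {d : ℝ | ∃ X ∈ U, ∃ x ∈ insert (0 : Site) X, ∃ y ∈ insert (0 : Site) X,
    d = dist2 x y}

/-- The diameter of a set of sites. -/
noncomputable def diam2 (K : Set Site) : ℝ :=
  sSup {d : ℝ | ∃ x ∈ K, ∃ y ∈ K, d = dist2 x y}

/-- The projection `π(K, u) = max {|⟨x − y, u⟩| : x, y ∈ K}`. -/
noncomputable def proj (K : Set Site) (u : ℝ × ℝ) : ℝ :=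
  sSup {d : ℝ | ∃ x ∈ K, ∃ y ∈ K, d = |ip x u - ip y u|}

/-- A `T`-droplet: a nonempty intersection of translated half-planes `H_u + a_u`,
`u ∈ T`. -/
def IsDroplet (T : Set (ℝ × ℝ)) (D : Set Site) : Prop :=
  D.Nonempty ∧ ∃ a : (ℝ × ℝ) → Site, D = ⋂ u ∈ T, {x : Site | ip (x - a u) u < 0}

/-- `D` is the smallest `T`-droplet containing `K`. -/
def IsMinDroplet (T : Set (ℝ × ℝ)) (K D : Set Site) : Prop :=
  IsDroplet T D ∧ K ⊆ D ∧ ∀ D' : Set Site, IsDroplet T D' → K ⊆ D' → D ⊆ D'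

/-- An `a`-cluster: a strongly connected set of `a` sites. -/
def IsCluster (κ : ℝ) (a : ℕ) (B : Finset Site) : Prop :=
  B.card = a ∧ Conn κ ↑B

/-- One step of the `α`-covering algorithm: two droplets of the current collection lying
within strong-connectivity reach of a common translate of `D̂` are replaced by the
smallest `S_B`-droplet containing their union. -/
inductive CoverStep (SB : Set (ℝ × ℝ)) (κ : ℝ) (Dhat : Set Site) :
    Multiset (Set Site) → Multiset (Set Site) → Prop
  | merge (rest : Multiset (Set Site)) (D₁ D₂ D' : Set Site) (x : Site) :
      Conn κ (D₁ ∪ D₂ ∪ ((fun z => z + x) '' Dhat)) →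
      IsMinDroplet SB (D₁ ∪ D₂) D' →
      CoverStep SB κ Dhat (D₁ ::ₘ D₂ ::ₘ rest) (D' ::ₘ rest)

/-- `𝒟` is an `α`-cover of `K`: a possible output of the `α`-covering algorithm, started
from a maximal collection of pairwise disjoint `a`-clusters of `K`, each contained in a
translate of `D̂`. -/
def IsAlphaCover (κ : ℝ) (a : ℕ) (SB : Set (ℝ × ℝ)) (Dhat : Set Site)
    (K : Set Site) (𝒟 : Multiset (Set Site)) : Prop :=
  ∃ B : List (Finset Site), ∃ c : List Site,
    B.length = c.length ∧
    (∀ Bi ∈ B, IsCluster κ a Bi ∧ ↑Bi ⊆ K) ∧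
    B.Pairwise (fun B₁ B₂ => Disjoint B₁ B₂) ∧
    (∀ B' : Finset Site, IsCluster κ a B' → ↑B' ⊆ K → ∃ Bi ∈ B, ¬ Disjoint B' Bi) ∧
    (∀ i : ℕ, ∀ h₁ : i < B.length, ∀ h₂ : i < c.length,
      ↑(B.get ⟨i, h₁⟩) ⊆ (fun z => z + c.get ⟨i, h₂⟩) '' Dhat) ∧
    Relation.ReflTransGen (CoverStep SB κ Dhat)
      ↑(c.map fun v => (fun z => z + v) '' Dhat) 𝒟

/-- The droplet `D` is `α`-covered (with respect to the initial set `A`). -/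
def AlphaCovered (κ : ℝ) (a : ℕ) (SB : Set (ℝ × ℝ)) (Dhat : Set Site)
    (A D : Set Site) : Prop :=
  IsAlphaCover κ a SB Dhat (D ∩ A) {D}

/-- The constant `ρ` used for balanced families:
`ρ = max {‖y − Z‖₂ : u ∈ S_B, |Z| = α − 1, y ∈ [H_u ∪ Z] ∖ H_u}`. -/
noncomputable def rho (U : Finset (Finset Site)) (SB : Set (ℝ × ℝ)) (a : ℕ) : ℝ :=
  sSup {d : ℝ | ∃ u ∈ SB, ∃ Z : Finset Site, Z.card = a - 1 ∧
    ∃ y ∈ bclosure U (halfPlane u ∪ ↑Z) \ halfPlane u,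
      d = sInf {r : ℝ | ∃ z ∈ Z, r = dist2 y z}}

/-- The connectivity constant `κ = 2(ρ + ν)` for balanced families. -/
noncomputable def kappaB (U : Finset (Finset Site)) (SB : Set (ℝ × ℝ)) (a : ℕ) : ℝ :=
  2 * (rho U SB a + nu U)

/-- A valid choice of the finite set `S_B` of stable directions for a balanced family:
`ᾱ(u) ≥ α` for all `u ∈ S_B`, and `S_B` meets every open semicircle. -/
def ValidSB (U : Finset (Finset Site)) (a : ℕ) (SB : Set (ℝ × ℝ)) : Prop :=
  SB.Finite ∧ SB ⊆ stableSet U ∧ (∀ u ∈ SB, (a : ℕ∞) ≤ alphaBar U u) ∧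
  ∀ w : ℝ × ℝ, unitVec w → ∃ u ∈ SB, 0 < ipR u w

/-- `D` is internally spanned by `A`: some strongly connected subset `L` of `[D ∩ A]`
has `D` as the smallest `T`-droplet containing it. -/
def InternallySpanned (U : Finset (Finset Site)) (T : Set (ℝ × ℝ)) (κ : ℝ)
    (A D : Set Site) : Prop :=
  ∃ L : Set Site, L ⊆ bclosure U (D ∩ A) ∧ Conn κ L ∧ IsMinDroplet T L D

/-- A valid choice of the set `S_U = {u*, −u*, u^l, u^r}` of stable directions for an
unbalanced family: `min {α(u*), α(−u*)} ≥ α + 1`, `u^l` (resp. `u^r`) lies in the open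
semicircle to the left (resp. right) of `u*`, and `min {ᾱ(u^l), ᾱ(u^r)} = α`. -/
def ValidSU (U : Finset (Finset Site)) (a : ℕ) (ustar ul ur : ℝ × ℝ) : Prop :=
  ustar ∈ stableSet U ∧ -ustar ∈ stableSet U ∧ ul ∈ stableSet U ∧ ur ∈ stableSet U ∧
  (a : ℕ∞) + 1 ≤ difficulty U ustar ∧ (a : ℕ∞) + 1 ≤ difficulty U (-ustar) ∧
  0 < ipR ul (-ustar.2, ustar.1) ∧ 0 < ipR ur (ustar.2, -ustar.1) ∧
  min (alphaBar U ul) (alphaBar U ur) = (a : ℕ∞)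

/-- The point of `S¹` at angle `θ`. -/
noncomputable def circlePt (θ : ℝ) : ℝ × ℝ := (Real.cos θ, Real.sin θ)

/-- `u` is a rational direction: it is parallel to a nonzero integer vector,
i.e. it has rational or infinite slope. -/
def RationalDir (u : ℝ × ℝ) : Prop :=
  ∃ x : Site, x ≠ 0 ∧ (x.1 : ℝ) * u.2 = (x.2 : ℝ) * u.1

/-- The closed arc of directions from `u` to `v` (anticlockwise). -/
def arcFrom (u v : ℝ × ℝ) : Set (ℝ × ℝ) :=
  {w | ∃ θ₁ θ₂ θ : ℝ, circlePt θ₁ = u ∧ circlePt θ₂ = v ∧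
    θ₁ ≤ θ₂ ∧ θ₂ < θ₁ + 2 * Real.pi ∧ θ ∈ Set.Icc θ₁ θ₂ ∧ circlePt θ = w}

/-- `u` and `v` are consecutive elements of `T`:
`u ≠ v` and `T ∩ [u, v] = {u, v}`. -/
def ConsecutiveIn (T : Set (ℝ × ℝ)) (u v : ℝ × ℝ) : Prop :=
  u ≠ v ∧ T ∩ arcFrom u v = {u, v}


/-!
Since `u` is rational, a unimodular change of coordinates of `ℤ²` carries `H_u` to the lower
half-plane and `ℓ_u^±` to the two halves of the horizontal axis, and the process is
equivariant under it; so we may take `u = (0, 1)`.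

It then suffices to find a rule `X ∈ U` contained in `H_u ∪ (ℓ_u⁺ ∖ {0})`: applied at the sites
of `ℓ_u⁻` from right to left, it lets a segment of `ℓ_u⁺` as long as `X` is wide infect all of
`ℓ_u⁻`. To find `X`, take a finite `Z'` with `[H_u ∪ Z'] ∩ ℓ_u⁻` infinite and extend every seed
to the right along its row. The closure `S` of the enlarged set is invariant under the unit
shift to the right, so each of its rows is either full or bounded on the left, and row `0` is
full. If `S` climbs above every seed, the rule infecting the first such site lies in `H_u`.
Otherwise let `j` be the highest full row: the first site of row `j` to be infected further
left than all seeds and all sites of `S` above row `j` (minus the width of the rules) can only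
have been infected by a rule looking down or to the right.
-/

section Bootstrap

variable {U : Finset (Finset Site)} {A B : Set Site}

lemma mem_bclosure_iff {x : Site} : x ∈ bclosure U A ↔ ∃ t, x ∈ iter U A t :=
  Set.mem_iUnion

lemma subset_bclosure : A ⊆ bclosure U A :=
  fun _ hx => mem_bclosure_iff.2 ⟨0, hx⟩

lemma iter_mono : Monotone (iter U A) :=
  monotone_nat_of_le_succ fun _ => Set.subset_union_left

lemma iter_mono_of_subset (h : A ⊆ B) : ∀ t, iter U A t ⊆ iter U B t
  | 0 => h
  | t + 1 => Set.union_subset_union (iter_mono_of_subset h t)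
      fun _ ⟨X, hX, hXA⟩ => ⟨X, hX, fun y hy => iter_mono_of_subset h t (hXA y hy)⟩

lemma bclosure_mono (h : A ⊆ B) : bclosure U A ⊆ bclosure U B :=
  Set.iUnion_mono (iter_mono_of_subset h)

lemma mem_bclosure_of_rule {x : Site} {X : Finset Site} (hX : X ∈ U)
    (hx : ∀ y ∈ X, x + y ∈ bclosure U A) : x ∈ bclosure U A := by
  choose! time htime using fun y hy => mem_bclosure_iff.1 (hx y hy)
  exact mem_bclosure_iff.2 ⟨X.sup time + 1,
    Or.inr ⟨X, hX, fun y hy => iter_mono (Finset.le_sup hy) (htime y hy)⟩⟩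

lemma add_mem_bclosure {g : Site} (hA : ∀ a ∈ A, a + g ∈ A) {z : Site}
    (hz : z ∈ bclosure U A) : z + g ∈ bclosure U A := by
  suffices h : ∀ t, ∀ z ∈ iter U A t, z + g ∈ iter U A t by
    obtain ⟨t, ht⟩ := mem_bclosure_iff.1 hz
    exact mem_bclosure_iff.2 ⟨t, h t z ht⟩
  intro t
  induction t with
  | zero => exact hA
  | succ t ih =>
    rintro z (hz | ⟨X, hX, hXz⟩)
    · exact Or.inl (ih z hz)
    · exact Or.inr ⟨X, hX, fun y hy => add_right_comm z g y ▸ ih _ (hXz y hy)⟩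

/-- The witness is the first site of `Q` to be infected. -/
lemma exists_rule_of_bclosure_meets {Q : Set Site} (hA : Disjoint A Q) {x : Site}
    (hx : x ∈ bclosure U A) (hxQ : x ∈ Q) :
    ∃ x ∈ Q, ∃ X ∈ U, ∀ y ∈ X, x + y ∈ bclosure U A ∧ x + y ∉ Q := by
  obtain ⟨t, ht⟩ := mem_bclosure_iff.1 hx
  induction t generalizing x with
  | zero => exact absurd hxQ (Set.disjoint_left.1 hA ht)
  | succ t ih =>
    rcases ht with ht | ⟨X, hX, hXx⟩
    · exact ih (mem_bclosure_iff.2 ⟨t, ht⟩) hxQ ht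
    · by_cases hQ : ∃ y ∈ X, x + y ∈ Q
      · obtain ⟨y, hy, hyQ⟩ := hQ
        exact ih (mem_bclosure_iff.2 ⟨t, hXx y hy⟩) hyQ (hXx y hy)
      · push Not at hQ
        exact ⟨x, hxQ, X, hX, fun y hy => ⟨mem_bclosure_iff.2 ⟨t, hXx y hy⟩, hQ y hy⟩⟩

end Bootstrap

section Transport

def mapFamily (c : Site ≃+ Site) (U : Finset (Finset Site)) : Finset (Finset Site) :=
  U.image (Finset.map c.toEquiv.toEmbedding)

variable (c : Site ≃+ Site) (U : Finset (Finset Site))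

lemma iter_preimage (A : Set Site) :
    ∀ t, iter U (c ⁻¹' A) t = c ⁻¹' iter (mapFamily c U) A t
  | 0 => rfl
  | t + 1 => by
    ext x
    simp only [iter, step, iter_preimage A t, mapFamily, Set.mem_union, Set.mem_preimage,
      map_add, Finset.mem_image, exists_exists_and_eq_and, Finset.forall_mem_map]
    rfl

lemma bclosure_preimage (A : Set Site) :
    bclosure U (c ⁻¹' A) = c ⁻¹' bclosure (mapFamily c U) A := by
  simp only [bclosure, iter_preimage, Set.preimage_iUnion]

end Transport

section Vertical

variable {U : Finset (Finset Site)}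

lemma mem_halfPlane_vertical {z : Site} : z ∈ halfPlane (0, 1) ↔ z.2 < 0 := by
  simp [halfPlane, ip]

lemma mem_lineMinus_vertical {z : Site} : z ∈ lineMinus (0, 1) ↔ z.2 = 0 ∧ z.1 ≤ 0 := by
  simp [lineMinus, ip, rightPerp]

lemma mem_linePlus_vertical {z : Site} : z ∈ linePlus (0, 1) ↔ z.2 = 0 ∧ 0 ≤ z.1 := by
  simp [linePlus, ip, rightPerp]

/-- `X ⊆ H_u ∪ (ℓ_u⁺ ∖ {0})` for `u = (0, 1)`. -/
def LooksDownOrRight (X : Finset Site) : Prop :=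
  ∀ y ∈ X, y.2 < 0 ∨ (y.2 = 0 ∧ 0 < y.1)

lemma exists_linePlus_of_looksDownOrRight {X : Finset Site} (hX : X ∈ U)
    (hXdr : LooksDownOrRight X) :
    ∃ Z : Finset Site, ↑Z ⊆ linePlus (0, 1) ∧
      lineMinus (0, 1) ⊆ bclosure U (halfPlane (0, 1) ∪ ↑Z) := by
  obtain ⟨r, hr⟩ := (insert 0 (X.image Prod.fst)).exists_le
  have hr0 : 0 ≤ r := hr 0 (Finset.mem_insert_self _ _)
  refine ⟨Finset.Icc (0, 0) (r, 0), fun z hz => ?_, ?_⟩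
  · simp only [Finset.coe_Icc, Set.mem_Icc, Prod.le_def] at hz
    exact mem_linePlus_vertical.2 ⟨by omega, hz.1.1⟩
  set S := bclosure U (halfPlane (0, 1) ∪ ↑(Finset.Icc ((0 : ℤ), (0 : ℤ)) (r, 0)))
  -- Applying `X` at `(k, 0)` only asks for sites below the axis or at most `r` to the right.
  have hsweep : ∀ m : ℕ, ∀ k : ℤ, -m ≤ k → k ≤ r → ((k, 0) : Site) ∈ S := by
    intro m
    induction m with
    | zero =>
      intro k hk0 hkr
      refine subset_bclosure (Or.inr ?_)
      simp only [Finset.coe_Icc, Set.mem_Icc, Prod.mk_le_mk, le_refl, and_true]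
      omega
    | succ m ih =>
      intro k hkm hkr
      by_cases hk : -(m : ℤ) ≤ k
      · exact ih k hk hkr
      refine mem_bclosure_of_rule hX fun y hy => ?_
      have hyr : y.1 ≤ r := hr y.1 (Finset.mem_insert_of_mem (Finset.mem_image_of_mem _ hy))
      rcases hXdr y hy with hy2 | ⟨hy2, hy1⟩
      · exact subset_bclosure (Or.inl (mem_halfPlane_vertical.2 (by simpa using hy2)))
      · have hxy : ((k, 0) : Site) + y = (k + y.1, 0) := Prod.ext rfl (by simp [hy2])
        exact hxy ▸ ih _ (by omega) (by omega)
  intro z hz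
  obtain ⟨hz2, hz1⟩ := mem_lineMinus_vertical.1 hz
  have hzk : z = (z.1, 0) := Prod.ext rfl hz2
  exact hzk ▸ hsweep z.1.natAbs z.1 (by omega) (by omega)

lemma mem_of_shift_invariant_of_le {S : Set Site} (hS : ∀ z ∈ S, z + (1, 0) ∈ S)
    {z w : Site} (hz : z ∈ S) (h2 : w.2 = z.2) (h1 : z.1 ≤ w.1) : w ∈ S := by
  have hshift : ∀ n : ℕ, z + ((n : ℤ), 0) ∈ S := by
    intro n
    induction n with
    | zero => simpa [Prod.mk_zero_zero] using hz
    | succ n ih => simpa [add_assoc] using hS _ ih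
  have hw : w = z + ((((w.1 - z.1).toNat : ℕ) : ℤ), 0) :=
    Prod.ext (by simp only [Int.ofNat_toNat, Prod.fst_add]; omega) (by simp [h2])
  exact hw ▸ hshift _

lemma exists_row_lower_bound {S : Set Site} (hS : ∀ z ∈ S, z + (1, 0) ∈ S) {j : ℤ}
    (hj : ¬ ∀ w : Site, w.2 = j → w ∈ S) :
    ∃ c : ℤ, ∀ z ∈ S, z.2 = j → c ≤ z.1 := by
  contrapose! hj
  intro w hw
  obtain ⟨z, hz, hz2, hz1⟩ := hj w.1
  exact mem_of_shift_invariant_of_le hS hz (by omega) hz1.le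

lemma row_zero_subset_of_infinite {S : Set Site} (hS : ∀ z ∈ S, z + (1, 0) ∈ S)
    (hinf : (S ∩ lineMinus (0, 1)).Infinite) :
    ∀ w : Site, w.2 = 0 → w ∈ S := by
  by_contra hrow
  obtain ⟨c, hc⟩ := exists_row_lower_bound hS hrow
  refine hinf ((Set.finite_Icc (c, 0) (0, 0)).subset fun z ⟨hzS, hz⟩ => ?_)
  obtain ⟨hz2, hz1⟩ := mem_lineMinus_vertical.1 hz
  exact ⟨⟨hc z hzS hz2, hz2.ge⟩, ⟨hz1, hz2.le⟩⟩

lemma exists_looksDownOrRight_of_escape {A : Set Site} {h : ℤ} (hA : ∀ a ∈ A, a.2 ≤ h)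
    {z : Site} (hz : z ∈ bclosure U A) (hzh : h < z.2) :
    ∃ X ∈ U, LooksDownOrRight X := by
  obtain ⟨x, hxh, X, hX, hXx⟩ := exists_rule_of_bclosure_meets (Q := {x | h < x.2})
    (Set.disjoint_left.2 fun a ha hah => (hah.trans_le (hA a ha)).false) hz hzh
  refine ⟨X, hX, fun y hy => Or.inl ?_⟩
  have := (hXx y hy).2
  simp only [Set.mem_ofPred_eq, Prod.snd_add, not_lt] at this hxh
  omega

lemma exists_looksDownOrRight_of_row_full {A : Set Site} {j : ℤ}
    (hfull : ∀ w : Site, w.2 = j → w ∈ bclosure U A)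
    (hA : ∃ p : ℤ, ∀ a ∈ A, a.2 = j → p ≤ a.1)
    (habove : ∃ γ : ℤ, ∀ z ∈ bclosure U A, j < z.2 → γ ≤ z.1) :
    ∃ X ∈ U, LooksDownOrRight X := by
  obtain ⟨p, hp⟩ := hA
  obtain ⟨γ, hγ⟩ := habove
  obtain ⟨r, hr⟩ := ((U.biUnion id).image Prod.fst).exists_le
  -- A site of row `j` left of `b` is not in `A`, and a rule infecting it cannot reach
  -- a site of `[A]` above row `j`.
  set b := min p (γ - r)
  have hAQ : Disjoint A {x : Site | x.2 = j ∧ x.1 < b} :=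
    Set.disjoint_left.2 fun a ha ⟨ha2, ha1⟩ => by have := hp a ha ha2; omega
  obtain ⟨x, ⟨hx2, hx1⟩, X, hX, hXx⟩ :=
    exists_rule_of_bclosure_meets hAQ (hfull (b - 1, j) rfl) ⟨rfl, by simp⟩
  refine ⟨X, hX, fun y hy => ?_⟩
  obtain ⟨hxyS, hxyQ⟩ := hXx y hy
  have hyr : y.1 ≤ r := hr _ (Finset.mem_image_of_mem _ (Finset.mem_biUnion.2 ⟨X, hX, hy⟩))
  simp only [Set.mem_ofPred_eq, Prod.fst_add, Prod.snd_add, not_and, not_lt] at hxyQ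
  rcases lt_trichotomy (x + y).2 j with hlt | heq | hgt
  · left; simp only [Prod.snd_add] at hlt; omega
  · right; simp only [Prod.snd_add] at heq; have := hxyQ (by omega); omega
  · have := hγ _ hxyS hgt
    simp only [Prod.fst_add] at this
    omega

lemma exists_looksDownOrRight_of_bddAbove {A : Set Site}
    (hS : ∀ z ∈ bclosure U A, z + (1, 0) ∈ bclosure U A)
    (hrow0 : ∀ w : Site, w.2 = 0 → w ∈ bclosure U A)
    (hA : ∃ p : ℤ, ∀ a ∈ A, 0 ≤ a.2 → p ≤ a.1)
    (hbdd : ∃ h : ℤ, ∀ z ∈ bclosure U A, z.2 ≤ h) :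
    ∃ X ∈ U, LooksDownOrRight X := by
  obtain ⟨h, hh⟩ := hbdd
  obtain ⟨p, hp⟩ := hA
  obtain ⟨j, ⟨hj0, hjfull⟩, hjmax⟩ := Int.exists_greatest_of_bdd
    (P := fun j => 0 ≤ j ∧ ∀ w : Site, w.2 = j → w ∈ bclosure U A)
    ⟨h, fun j ⟨_, hj⟩ => hh _ (hj (0, j) rfl)⟩ ⟨0, le_rfl, hrow0⟩
  have hrow : ∀ i, j < i → ∃ c : ℤ, ∀ z ∈ bclosure U A, z.2 = i → c ≤ z.1 := fun i hi =>
    exists_row_lower_bound hS fun hfull => by have := hjmax i ⟨by omega, hfull⟩; omega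
  choose! c hc using hrow
  obtain ⟨γ, hγ⟩ := ((Finset.Ioc j h).image c).bddBelow
  refine exists_looksDownOrRight_of_row_full hjfull
    ⟨p, fun a ha ha2 => hp a ha (ha2 ▸ hj0)⟩ ⟨γ, fun z hzS hz => ?_⟩
  have hγz := hγ (Finset.mem_coe.2 (Finset.mem_image_of_mem c
    (Finset.mem_Ioc.2 ⟨hz, hh z hzS⟩)))
  exact hγz.trans (hc _ hz z hzS rfl)

lemma exists_looksDownOrRight {Z' : Finset Site}
    (hinf : (bclosure U (halfPlane (0, 1) ∪ ↑Z') ∩ lineMinus (0, 1)).Infinite) :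
    ∃ X ∈ U, LooksDownOrRight X := by
  set A : Set Site := halfPlane (0, 1) ∪ {z | ∃ z' ∈ Z', z.2 = z'.2 ∧ z'.1 ≤ z.1}
  have hS : ∀ z ∈ bclosure U A, z + (1, 0) ∈ bclosure U A := by
    refine fun z => add_mem_bclosure fun a ha => ?_
    rcases ha with ha | ⟨z', hz', ha2, ha1⟩
    · exact Or.inl (mem_halfPlane_vertical.2 (by simpa using mem_halfPlane_vertical.1 ha))
    · exact Or.inr ⟨z', hz', by simpa using ha2, by simp only [Prod.fst_add]; omega⟩
  have hZ'A : halfPlane (0, 1) ∪ ↑Z' ⊆ A :=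
    Set.union_subset_union_right _ fun z hz => ⟨z, hz, rfl, le_rfl⟩
  have hrow0 := row_zero_subset_of_infinite hS
    (hinf.mono (Set.inter_subset_inter_left _ (bclosure_mono hZ'A)))
  obtain ⟨h, hh⟩ := (insert 0 (Z'.image Prod.snd)).exists_le
  have hAh : ∀ a ∈ A, a.2 ≤ h := by
    rintro a (ha | ⟨z', hz', ha2, -⟩)
    · have := hh 0 (Finset.mem_insert_self _ _)
      have := mem_halfPlane_vertical.1 ha
      omega
    · exact ha2 ▸ hh _ (Finset.mem_insert_of_mem (Finset.mem_image_of_mem _ hz'))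
  by_cases hesc : ∃ z ∈ bclosure U A, h < z.2
  · obtain ⟨z, hzS, hzh⟩ := hesc
    exact exists_looksDownOrRight_of_escape hAh hzS hzh
  push Not at hesc
  obtain ⟨p, hp⟩ := (Z'.image Prod.fst).bddBelow
  refine exists_looksDownOrRight_of_bddAbove hS hrow0 ⟨p, ?_⟩ ⟨h, hesc⟩
  rintro a (ha | ⟨z', hz', -, ha1⟩) ha2
  · have := mem_halfPlane_vertical.1 ha
    omega
  · exact (hp (Finset.mem_coe.2 (Finset.mem_image_of_mem _ hz'))).trans ha1

theorem exists_linePlus_vertical {Z' : Finset Site}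
    (hinf : (bclosure U (halfPlane (0, 1) ∪ ↑Z') ∩ lineMinus (0, 1)).Infinite) :
    ∃ Z : Finset Site, ↑Z ⊆ linePlus (0, 1) ∧
      lineMinus (0, 1) ⊆ bclosure U (halfPlane (0, 1) ∪ ↑Z) :=
  let ⟨_, hX, hXdr⟩ := exists_looksDownOrRight hinf
  exists_linePlus_of_looksDownOrRight hX hXdr

end Vertical

section Rational

variable {u : ℝ × ℝ}

lemma exists_coprime_normal (hu : unitVec u) (hur : RationalDir u) :
    ∃ a b : ℤ, IsCoprime a b ∧ ∃ s : ℝ, 0 < s ∧ (a : ℝ) = s * u.1 ∧ (b : ℝ) = s * u.2 := by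
  obtain ⟨x, hx0, hpar⟩ := hur
  have hu' : u.1 ^ 2 + u.2 ^ 2 = 1 := hu
  set t := ip x u
  have hx1 : (x.1 : ℝ) = t * u.1 := by
    simp only [t, ip]; linear_combination (-x.1 : ℝ) * hu' + u.2 * hpar
  have hx2 : (x.2 : ℝ) = t * u.2 := by
    simp only [t, ip]; linear_combination (-x.2 : ℝ) * hu' - u.1 * hpar
  obtain ⟨g, a, b, hg, hab, ha, hb⟩ :=
    Int.exists_gcd_one' (m := x.1) (n := x.2)
      (Int.gcd_pos_iff.2 (by by_contra! h; exact hx0 (Prod.ext h.1 h.2)))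
  have hcop : IsCoprime a b := Int.isCoprime_iff_gcd_eq_one.2 hab
  have hg' : (0 : ℝ) < g := by exact_mod_cast hg
  have ht : t ≠ 0 := by
    rintro ht
    refine hx0 (Prod.ext ?_ ?_)
    · exact_mod_cast (hx1.trans (by rw [ht, zero_mul]) : (x.1 : ℝ) = 0)
    · exact_mod_cast (hx2.trans (by rw [ht, zero_mul]) : (x.2 : ℝ) = 0)
  have ha' : (a : ℝ) = t / g * u.1 := by
    rw [div_mul_eq_mul_div, ← hx1, ha]; push_cast; field_simp
  have hb' : (b : ℝ) = t / g * u.2 := by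
    rw [div_mul_eq_mul_div, ← hx2, hb]; push_cast; field_simp
  rcases ht.lt_or_gt with ht | ht
  · exact ⟨-a, -b, hcop.neg_neg, -(t / g), by simp [div_neg_iff, ht, hg'],
      by push_cast; linarith, by push_cast; linarith⟩
  · exact ⟨a, b, hcop, t / g, by positivity, ha', hb'⟩

/-- A unimodular change of coordinates taking the line `a * z.1 + b * z.2 = 0` to the
horizontal axis; `h` is a Bézout relation for the coprime pair `a, b`. -/
def unimodularFrame (a b m n : ℤ) (h : m * a + n * b = 1) : Site ≃+ Site where
  toFun z := (n * z.1 - m * z.2, a * z.1 + b * z.2)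
  invFun w := (b * w.1 + m * w.2, -a * w.1 + n * w.2)
  left_inv z := Prod.ext (by linear_combination z.1 * h) (by linear_combination z.2 * h)
  right_inv w := Prod.ext (by linear_combination w.1 * h) (by linear_combination w.2 * h)
  map_add' z w := Prod.ext
    (by simp only [Prod.fst_add, Prod.snd_add, Prod.mk_add_mk]; ring)
    (by simp only [Prod.fst_add, Prod.snd_add, Prod.mk_add_mk]; ring)

lemma exists_addEquiv_vertical (hu : unitVec u) (hur : RationalDir u) :
    ∃ c : Site ≃+ Site, halfPlane u = c ⁻¹' halfPlane (0, 1) ∧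
      lineMinus u = c ⁻¹' lineMinus (0, 1) ∧ linePlus u = c ⁻¹' linePlus (0, 1) := by
  obtain ⟨a, b, ⟨m, n, hmn⟩, s, hs, ha, hb⟩ := exists_coprime_normal hu hur
  have hN : ∀ z : Site, s * ip z u = ((a * z.1 + b * z.2 : ℤ) : ℝ) := fun z => by
    simp only [ip]; push_cast; linear_combination (-z.1 : ℝ) * ha - z.2 * hb
  have hP : ∀ z : Site, a * z.1 + b * z.2 = 0 →
      s * ip z (rightPerp u) = ((a ^ 2 + b ^ 2 : ℤ) : ℝ) * ((n * z.1 - m * z.2 : ℤ) : ℝ) := by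
    intro z hz
    have hzP : b * z.1 - a * z.2 = (a ^ 2 + b ^ 2) * (n * z.1 - m * z.2) := by
      linear_combination (b * m - a * n) * hz - (b * z.1 - a * z.2) * hmn
    rw [← Int.cast_mul, ← hzP]
    simp only [ip, rightPerp]; push_cast; linear_combination (-z.1 : ℝ) * hb + z.2 * ha
  have hab : 0 < a ^ 2 + b ^ 2 := by
    rcases (show a ≠ 0 ∨ b ≠ 0 by by_contra! h; simp [h.1, h.2] at hmn) with h | h <;> positivity
  have hline : ∀ z : Site, ip z u = 0 ↔ a * z.1 + b * z.2 = 0 := fun z => by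
    rw [← Int.cast_eq_zero (α := ℝ), ← hN z, mul_eq_zero, or_iff_right hs.ne']
  have habR : (0 : ℝ) < ((a ^ 2 + b ^ 2 : ℤ) : ℝ) := by exact_mod_cast hab
  refine ⟨unimodularFrame a b m n hmn, ?_, ?_, ?_⟩ <;> ext z <;>
    simp only [Set.mem_preimage, mem_halfPlane_vertical, mem_lineMinus_vertical,
      mem_linePlus_vertical, unimodularFrame, AddEquiv.coe_mk, Equiv.coe_fn_mk]
  · have := hN z
    rw [show z ∈ halfPlane u ↔ ip z u < 0 from Iff.rfl, ← Int.cast_lt_zero (R := ℝ)]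
    constructor <;> intro h <;> nlinarith
  · refine (and_congr (hline z) Iff.rfl).trans (and_congr_right fun h0 => ?_)
    have := hP z h0
    rw [← Int.cast_nonpos (R := ℝ)]
    constructor <;> intro h <;> nlinarith
  · refine (and_congr (hline z) Iff.rfl).trans (and_congr_right fun h0 => ?_)
    have := hP z h0
    rw [← Int.cast_nonneg_iff (R := ℝ)]
    constructor <;> intro h <;> nlinarith

end Rational

theorem exists_linePlus_of_infinite {U : Finset (Finset Site)} {u : ℝ × ℝ}
    (hu : unitVec u) (hur : RationalDir u) {Z' : Finset Site}
    (hinf : (bclosure U (halfPlane u ∪ ↑Z') ∩ lineMinus u).Infinite) :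
    ∃ Z : Finset Site, ↑Z ⊆ linePlus u ∧ lineMinus u ⊆ bclosure U (halfPlane u ∪ ↑Z) := by
  obtain ⟨c, hH, hminus, hplus⟩ := exists_addEquiv_vertical hu hur
  have hseed : ∀ Z : Finset Site, halfPlane u ∪ c ⁻¹' ↑Z =
      c ⁻¹' (halfPlane (0, 1) ∪ ↑Z) := fun Z => by rw [hH, Set.preimage_union]
  obtain ⟨Z₀, hZ₀, hcover⟩ := exists_linePlus_vertical (U := mapFamily c U)
    (Z' := Z'.preimage c.symm c.symm.injective.injOn) <| by
    refine fun hfin => hinf (hfin.preimage c.injective.injOn |>.subset ?_)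
    rw [Set.preimage_inter, ← bclosure_preimage, ← hseed, Finset.coe_preimage,
      Set.preimage_preimage, ← hminus]
    simp
  refine ⟨Z₀.preimage c c.injective.injOn, ?_, ?_⟩
  · rw [Finset.coe_preimage, hplus]
    exact Set.preimage_mono hZ₀
  · rw [Finset.coe_preimage, hseed, bclosure_preimage, hminus]
    exact Set.preimage_mono hcover

theorem leftright_cluster_general
    (U : Finset (Finset Site))
    (u : ℝ × ℝ) (hu : unitVec u) (hur : RationalDir u)
    (hfin : alphaMinus U u ≠ ⊤) :
    ∃ Z : Finset Site, ↑Z ⊆ linePlus u ∧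
      lineMinus u ⊆ bclosure U (halfPlane u ∪ ↑Z) := by
  obtain ⟨Z', hZ'⟩ : ∃ Z' : Finset Site,
      (bclosure U (halfPlane u ∪ ↑Z') ∩ lineMinus u).Infinite := by
    contrapose! hfin
    rw [alphaMinus, sInf_eq_top]
    rintro n ⟨Z, -, hZ⟩
    exact absurd (hfin Z) hZ
  exact exists_linePlus_of_infinite hu hur hZ'

/-- **Lemma 3.3 (Lemma 32 of [BSU]).**  If `α⁻(u) < ∞`, then there is a finite set
`Z ⊆ ℓ_u⁺` such that `ℓ_u⁻ ⊆ [H_u ∪ Z]`. -/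
theorem leftright_cluster
    (U : Finset (Finset Site)) (hU : ∀ X ∈ U, (0 : Site) ∉ X)
    (u : ℝ × ℝ) (hu : unitVec u) (hur : RationalDir u)
    (hfin : alphaMinus U u ≠ ⊤) :
    ∃ Z : Finset Site, ↑Z ⊆ linePlus u ∧
      lineMinus u ⊆ bclosure U (halfPlane u ∪ ↑Z) :=
  leftright_cluster_general U u hu hur hfin

end BP
end

section
/- Let U be a balanced critical two-dimensional update family with difficulty α, and fix S_B, D̂ and κ as in the α-covering algorithm. Then there exists a constant c > 0 (depending only on U and D̂) such that if D is an α-covered S_B-droplet with respect to A ⊆ ℤ², then D ∩ A contains at least c·diam(D) pairwise disjoint α-clusters. -/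
open MeasureTheory Filter Set

namespace BP

/-! The weights `λ_u ≥ 1` with `∑_{u ∈ S_B} λ_u u = 0` exist because `S_B` meets every open
semicircle, so that `0` is an interior point of its convex hull.  For such weights the weighted
width `∑ λ_u h_K(u)` of a set `K` (with `h_K` its support function) is translation invariant and
bounds `δ · diam K`, where `δ > 0` measures how evenly `S_B` covers the circle.  When the
`α`-covering algorithm merges two droplets that are joined through a translate of `D̂`, the
weighted width grows by at most a constant.  Hence a droplet assembled from `k` translates of
`D̂` has diameter `O(k)`, while the `k` initial `α`-clusters are pairwise disjoint and lie in
`D ∩ A`. -/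

open RealInnerProductSpace

section PositiveSpanning

variable {F : Type*} [NormedAddCommGroup F] [InnerProductSpace ℝ F] {s : Finset F}

theorem exists_pos_mul_norm_le_inner [ProperSpace F] [Nontrivial F]
    (hs : ∀ w : F, ‖w‖ = 1 → ∃ u ∈ s, 0 < ⟪u, w⟫) :
    ∃ δ > 0, ∀ z : F, ∃ u ∈ s, δ * ‖z‖ ≤ ⟪u, z⟫ := by
  obtain ⟨w₁, hw₁⟩ := (NormedSpace.sphere_nonempty (x := (0 : F)) (r := 1)).2 zero_le_one
  have hne : s.Nonempty := by
    obtain ⟨u, hu, -⟩ := hs w₁ (by simpa using hw₁)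
    exact ⟨u, hu⟩
  set f : F → ℝ := fun w => s.sup' hne fun u => ⟪u, w⟫
  have hf : Continuous f := Continuous.finset_sup'_apply hne fun u _ => by fun_prop
  obtain ⟨w₀, hw₀, hmin⟩ :=
    (isCompact_sphere (0 : F) 1).exists_isMinOn ⟨w₁, hw₁⟩ hf.continuousOn
  refine ⟨f w₀, ?_, fun z => ?_⟩
  · obtain ⟨u, hu, hpos⟩ := hs w₀ (by simpa using hw₀)
    exact hpos.trans_le (Finset.le_sup' (fun u => ⟪u, w₀⟫) hu)
  rcases eq_or_ne z 0 with rfl | hz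
  · obtain ⟨u, hu⟩ := hne
    exact ⟨u, hu, by simp⟩
  obtain ⟨u, hu, hmax⟩ := Finset.exists_mem_eq_sup' hne fun u => ⟪u, ‖z‖⁻¹ • z⟫
  refine ⟨u, hu, ?_⟩
  have hle : f w₀ ≤ ‖z‖⁻¹ * ⟪u, z⟫ := by
    rw [← real_inner_smul_right, ← hmax]
    exact hmin (by simp [norm_smul, hz])
  rwa [inv_mul_eq_div, le_div_iff₀ (norm_pos_iff.2 hz)] at hle

theorem closedBall_subset_convexHull [CompleteSpace F] {δ : ℝ}
    (hδ : ∀ z : F, ∃ u ∈ s, δ * ‖z‖ ≤ ⟪u, z⟫) :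
    Metric.closedBall 0 δ ⊆ convexHull ℝ (s : Set F) := by
  intro z hz
  by_contra hzs
  obtain ⟨f, c, hfs, hfz⟩ := geometric_hahn_banach_closed_point (convex_convexHull ℝ _)
    (s.finite_toSet.isCompact_convexHull (𝕜 := ℝ)).isClosed hzs
  set m := (InnerProductSpace.toDual ℝ F).symm f
  obtain ⟨u, hu, hum⟩ := hδ m
  have hmu : ⟪m, u⟫ < c := by
    rw [InnerProductSpace.toDual_symm_apply (𝕜 := ℝ)]
    exact hfs u (subset_convexHull ℝ _ hu)
  have hmz : c < ⟪m, z⟫ := by rwa [InnerProductSpace.toDual_symm_apply (𝕜 := ℝ)]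
  have hz' : ⟪m, z⟫ ≤ ‖m‖ * δ := (real_inner_le_norm m z).trans
    (mul_le_mul_of_nonneg_left (mem_closedBall_zero_iff.1 hz) (norm_nonneg m))
  rw [real_inner_comm] at hum
  linarith [mul_comm δ ‖m‖]

theorem exists_nonneg_sum_smul_eq {δ : ℝ} (hδ : 0 < δ)
    (hball : Metric.closedBall 0 δ ⊆ convexHull ℝ (s : Set F)) (y : F) :
    ∃ μ : F → ℝ, (∀ v ∈ s, 0 ≤ μ v) ∧ ∑ v ∈ s, μ v • v = y := by
  set t := δ / (‖y‖ + 1)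
  have ht : 0 < t := by positivity
  have hty : t • y ∈ Metric.closedBall (0 : F) δ := by
    rw [mem_closedBall_zero_iff, norm_smul, Real.norm_of_nonneg ht.le, div_mul_eq_mul_div,
      div_le_iff₀ (by positivity)]
    nlinarith [norm_nonneg y]
  obtain ⟨w, hw, -, hwy⟩ := Finset.mem_convexHull'.1 (hball hty)
  refine ⟨fun v => t⁻¹ * w v, fun v hv => mul_nonneg (inv_nonneg.2 ht.le) (hw v hv), ?_⟩
  simp_rw [mul_smul, ← Finset.smul_sum, hwy, inv_smul_smul₀ ht.ne']

theorem exists_one_le_sum_smul_eq_zero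
    (hspan : ∀ y : F, ∃ μ : F → ℝ, (∀ v ∈ s, 0 ≤ μ v) ∧ ∑ v ∈ s, μ v • v = y) :
    ∃ lam : F → ℝ, (∀ v ∈ s, 1 ≤ lam v) ∧ ∑ v ∈ s, lam v • v = 0 := by
  obtain ⟨μ, hμ, hsum⟩ := hspan (-∑ v ∈ s, v)
  refine ⟨fun v => 1 + μ v, fun v hv => le_add_of_nonneg_right (hμ v hv), ?_⟩
  simp_rw [add_smul, one_smul, Finset.sum_add_distrib, hsum, add_neg_cancel]

end PositiveSpanning

section Plane

open WithLp

def toR2 (x : Site) : ℝ × ℝ := ((x.1 : ℝ), (x.2 : ℝ))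

lemma inner_toLp (z w : ℝ × ℝ) : ⟪toLp 2 z, toLp 2 w⟫ = ipR z w := by
  simp only [prod_inner_apply, RCLike.inner_apply, conj_trivial, ipR]
  ring

lemma norm_toLp (z : ℝ × ℝ) : ‖toLp 2 z‖ = √(z.1 ^ 2 + z.2 ^ 2) := by
  simp [prod_norm_eq_of_L2]

lemma ip_eq_inner (x : Site) (u : ℝ × ℝ) : ip x u = ⟪toLp 2 (toR2 x), toLp 2 u⟫ := by
  rw [inner_toLp]
  rfl

lemma dist2_eq_dist (x y : Site) : dist2 x y = dist (toLp 2 (toR2 x)) (toLp 2 (toR2 y)) := by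
  rw [dist_eq_norm, ← toLp_sub, norm_toLp]
  simp [dist2, toR2]

lemma dist2_nonneg (x y : Site) : 0 ≤ dist2 x y := Real.sqrt_nonneg _

lemma dist2_comm (x y : Site) : dist2 x y = dist2 y x := by
  simp only [dist2_eq_dist, dist_comm]

lemma dist2_self (x : Site) : dist2 x x = 0 := by
  simp [dist2_eq_dist]

lemma dist2_triangle (x y z : Site) : dist2 x z ≤ dist2 x y + dist2 y z := by
  simp only [dist2_eq_dist]
  exact dist_triangle _ _ _

lemma diam2_le {K : Set Site} {r : ℝ} (hr : 0 ≤ r) (h : ∀ x ∈ K, ∀ y ∈ K, dist2 x y ≤ r) :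
    diam2 K ≤ r :=
  Real.sSup_le (by rintro _ ⟨x, hx, y, hy, rfl⟩; exact h x hx y hy) hr

lemma ip_sub_ip_le_dist2 {u : ℝ × ℝ} (hu : unitVec u) (x y : Site) :
    ip x u - ip y u ≤ dist2 x y := by
  have hnorm : ‖toLp 2 u‖ = 1 := by rw [norm_toLp, hu, Real.sqrt_one]
  rw [ip_eq_inner, ip_eq_inner, ← inner_sub_left, dist2_eq_dist, dist_eq_norm]
  simpa [hnorm] using real_inner_le_norm (toLp 2 (toR2 x) - toLp 2 (toR2 y)) (toLp 2 u)

lemma ip_add (x y : Site) (u : ℝ × ℝ) : ip (x + y) u = ip x u + ip y u := by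
  simp only [ip, Prod.fst_add, Prod.snd_add, Int.cast_add]
  ring

lemma ip_sub (x y : Site) (u : ℝ × ℝ) : ip (x - y) u = ip x u - ip y u := by
  simp only [ip, Prod.fst_sub, Prod.snd_sub, Int.cast_sub]
  ring

variable {s : Finset (ℝ × ℝ)}

lemma exists_inner_pos_of_unitVec (hs : ∀ w, unitVec w → ∃ u ∈ s, 0 < ipR u w)
    (w : WithLp 2 (ℝ × ℝ)) (hw : ‖w‖ = 1) : ∃ u ∈ s.image (toLp 2), 0 < ⟪u, w⟫ := by
  obtain ⟨w⟩ := w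
  rw [norm_toLp, Real.sqrt_eq_one] at hw
  obtain ⟨u, hu, hpos⟩ := hs w hw
  exact ⟨toLp 2 u, Finset.mem_image_of_mem _ hu, by rwa [inner_toLp]⟩

lemma exists_pos_mul_dist2_le_ip_sub (hs : ∀ w, unitVec w → ∃ u ∈ s, 0 < ipR u w) :
    ∃ δ > 0, ∀ x y : Site, ∃ u ∈ s, δ * dist2 x y ≤ ip x u - ip y u := by
  obtain ⟨δ, hδ, h⟩ := exists_pos_mul_norm_le_inner (exists_inner_pos_of_unitVec hs)
  refine ⟨δ, hδ, fun x y => ?_⟩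
  obtain ⟨_, hu', hle⟩ := h (toLp 2 (toR2 x) - toLp 2 (toR2 y))
  obtain ⟨u, hu, rfl⟩ := Finset.mem_image.1 hu'
  refine ⟨u, hu, ?_⟩
  rwa [dist2_eq_dist, dist_eq_norm, ip_eq_inner, ip_eq_inner, ← inner_sub_left, real_inner_comm]

lemma exists_one_le_sum_mul_ip_eq_zero (hs : ∀ w, unitVec w → ∃ u ∈ s, 0 < ipR u w) :
    ∃ lam : ℝ × ℝ → ℝ, (∀ u ∈ s, 1 ≤ lam u) ∧ ∀ x : Site, ∑ u ∈ s, lam u * ip x u = 0 := by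
  obtain ⟨δ, hδ, h⟩ := exists_pos_mul_norm_le_inner (exists_inner_pos_of_unitVec hs)
  obtain ⟨lam, hlam, hsum⟩ := exists_one_le_sum_smul_eq_zero
    (exists_nonneg_sum_smul_eq hδ (closedBall_subset_convexHull h))
  refine ⟨fun u => lam (toLp 2 u), fun u hu => hlam _ (Finset.mem_image_of_mem _ hu),
    fun x => ?_⟩
  rw [Finset.sum_image fun _ _ _ _ h => toLp_injective 2 h] at hsum
  have := congrArg (⟪toLp 2 (toR2 x), ·⟫) hsum
  simpa only [inner_sum, real_inner_smul_right, inner_zero_right, ip_eq_inner] using this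

end Plane

lemma exists_ip_mem_Ioc_zero_one {u : ℝ × ℝ} (hu : unitVec u) : ∃ e : Site, ip e u ∈ Ioc 0 1 := by
  have h₁ : |u.1| ≤ 1 := sq_le_one_iff_abs_le_one _ |>.1 (by nlinarith [sq_nonneg u.2, hu.le])
  have h₂ : |u.2| ≤ 1 := sq_le_one_iff_abs_le_one _ |>.1 (by nlinarith [sq_nonneg u.1, hu.le])
  rcases lt_trichotomy u.1 0 with h | h | h
  · exact ⟨(-1, 0), by simp [ip, h], by simp [ip]; linarith [neg_abs_le u.1]⟩
  · rcases lt_or_gt_of_ne (show u.2 ≠ 0 by rintro h'; simp [unitVec, h, h'] at hu) with h' | h'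
    · exact ⟨(0, -1), by simp [ip, h'], by simp [ip]; linarith [neg_abs_le u.2]⟩
    · exact ⟨(0, 1), by simp [ip, h'], by simp [ip]; linarith [le_abs_self u.2]⟩
  · exact ⟨(1, 0), by simp [ip, h], by simp [ip]; linarith [le_abs_self u.1]⟩

lemma exists_ip_mem_Ioc {u : ℝ × ℝ} (hu : unitVec u) (t : ℝ) :
    ∃ a : Site, ip a u ∈ Ioc t (t + 1) := by
  obtain ⟨e, he₀, he₁⟩ := exists_ip_mem_Ioc_zero_one hu
  obtain ⟨m, hm, -⟩ := existsUnique_add_zsmul_mem_Ioc he₀ 0 t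
  rw [zero_add, zsmul_eq_mul] at hm
  have hip : ip (m * e.1, m * e.2) u = m * ip e u := by
    simp only [ip, Int.cast_mul]
    ring
  exact ⟨(m * e.1, m * e.2), by rw [hip]; exact ⟨hm.1, hm.2.trans (by linarith)⟩⟩

lemma exists_dist2_le_of_conn_union {κ d : ℝ} (hκ : 0 ≤ κ) (hd : 0 ≤ d) {E₁ E₂ H : Set Site}
    (hH : ∀ h ∈ H, ∀ h' ∈ H, dist2 h h' ≤ d) (hconn : Conn κ (E₁ ∪ E₂ ∪ H))
    {p₁ p₂ : Site} (hp₁ : p₁ ∈ E₁) (hp₂ : p₂ ∈ E₂) :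
    ∃ q₁ ∈ E₁, ∃ q₂ ∈ E₂, dist2 q₁ q₂ ≤ d + 2 * κ := by
  by_contra! hfar
  -- a path from `E₁` to `E₂` has to cross `H`, which it enters from `E₁`
  have hreach : ∀ z, Relation.ReflTransGen (fun b c => c ∈ E₁ ∪ E₂ ∪ H ∧ dist2 b c ≤ κ) p₁ z →
      z ∈ E₁ ∨ z ∈ H ∧ ∃ q ∈ E₁, ∃ h ∈ H, dist2 q h ≤ κ := by
    intro z hz
    induction hz with
    | refl => exact .inl hp₁
    | @tail b c _ hbc ih =>
      obtain ⟨(hc | hc) | hc, hbc⟩ := hbc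
      · exact .inl hc
      · exfalso
        rcases ih with hb | ⟨hb, q, hq, h, hh, hqh⟩
        · linarith [hfar b hb c hc]
        · linarith [hfar q hq c hc, dist2_triangle q h c, dist2_triangle h b c, hH h hh b hb]
      · rcases ih with hb | ⟨-, hq⟩
        · exact .inr ⟨hc, b, hb, c, hc, hbc⟩
        · exact .inr ⟨hc, hq⟩
  rcases hreach p₂ (hconn p₁ (.inl (.inl hp₁)) p₂ (.inl (.inr hp₂))) with
    h | ⟨hH₂, q, hq, h, hh, hqh⟩
  · linarith [hfar p₂ h p₂ hp₂, dist2_self p₂]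
  · linarith [hfar q hq p₂ hp₂, dist2_triangle q h p₂, hH h hh p₂ hH₂]

section Widths

variable {s : Finset (ℝ × ℝ)} {lam : ℝ × ℝ → ℝ}

-- Translates `H_u + a` are only available for `a ∈ ℤ²`, hence the loss of `1`.
lemma IsMinDroplet.ip_le_add_one (hunit : ∀ u ∈ s, unitVec u) {K D : Set Site}
    (hmin : IsMinDroplet ↑s K D) (hK : K.Nonempty) {b : ℝ × ℝ → ℝ}
    (hb : ∀ u ∈ s, ∀ x ∈ K, ip x u ≤ b u) : ∀ u ∈ s, ∀ x ∈ D, ip x u ≤ b u + 1 := by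
  have : ∀ u, ∃ a : Site, u ∈ s → ip a u ∈ Ioc (b u) (b u + 1) := fun u => by
    by_cases hu : u ∈ s
    · exact (exists_ip_mem_Ioc (hunit u hu) (b u)).imp fun _ h _ => h
    · exact ⟨0, fun h => absurd h hu⟩
  choose a ha using this
  set D₀ := ⋂ u ∈ (s : Set (ℝ × ℝ)), {x : Site | ip (x - a u) u < 0}
  have hKD₀ : K ⊆ D₀ := fun x hx => mem_iInter₂.2 fun u hu => by
    rw [mem_ofPred_eq, ip_sub]
    linarith [hb u hu x hx, (ha u hu).1]
  intro u hu x hx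
  have hx₀ := mem_iInter₂.1 (hmin.2.2 D₀ ⟨hK.mono hKD₀, a, rfl⟩ hKD₀ hx) u hu
  rw [mem_ofPred_eq, ip_sub] at hx₀
  linarith [(ha u hu).2]

def WeightedWidthLE (s : Finset (ℝ × ℝ)) (lam : ℝ × ℝ → ℝ) (E : Set Site) (r : ℝ) : Prop :=
  ∃ b : ℝ × ℝ → ℝ, (∀ u ∈ s, ∀ x ∈ E, ip x u ≤ b u) ∧ ∑ u ∈ s, lam u * b u ≤ r

lemma WeightedWidthLE.mono {E : Set Site} {r r' : ℝ} (h : WeightedWidthLE s lam E r)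
    (hr : r ≤ r') : WeightedWidthLE s lam E r' :=
  let ⟨b, hb, hsum⟩ := h
  ⟨b, hb, hsum.trans hr⟩

lemma WeightedWidthLE.nonneg (hlam : ∀ u ∈ s, 0 ≤ lam u)
    (hbal : ∀ x : Site, ∑ u ∈ s, lam u * ip x u = 0) {E : Set Site} {r : ℝ}
    (h : WeightedWidthLE s lam E r) (hE : E.Nonempty) : 0 ≤ r := by
  obtain ⟨b, hb, hsum⟩ := h
  obtain ⟨p, hp⟩ := hE
  calc 0 = ∑ u ∈ s, lam u * ip p u := (hbal p).symm
    _ ≤ ∑ u ∈ s, lam u * b u := Finset.sum_le_sum fun u hu =>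
        mul_le_mul_of_nonneg_left (hb u hu p hp) (hlam u hu)
    _ ≤ r := hsum

lemma WeightedWidthLE.dist2_le_div {δ : ℝ} (hδ : 0 < δ)
    (hδs : ∀ x y : Site, ∃ u ∈ s, δ * dist2 x y ≤ ip x u - ip y u)
    (hlam : ∀ u ∈ s, 1 ≤ lam u) (hbal : ∀ x : Site, ∑ u ∈ s, lam u * ip x u = 0)
    {E : Set Site} {r : ℝ} (h : WeightedWidthLE s lam E r) {x y : Site} (hx : x ∈ E)
    (hy : y ∈ E) : dist2 x y ≤ r / δ := by
  obtain ⟨b, hb, hsum⟩ := h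
  obtain ⟨u, hu, hxy⟩ := hδs x y
  have hterm : ∀ v ∈ s, 0 ≤ lam v * (b v - ip y v) := fun v hv =>
    mul_nonneg (zero_le_one.trans (hlam v hv)) (sub_nonneg.2 (hb v hv y hy))
  rw [le_div_iff₀ hδ, mul_comm]
  calc δ * dist2 x y ≤ b u - ip y u := by linarith [hb u hu x hx]
    _ ≤ lam u * (b u - ip y u) := le_mul_of_one_le_left (sub_nonneg.2 (hb u hu y hy)) (hlam u hu)
    _ ≤ ∑ v ∈ s, lam v * (b v - ip y v) := Finset.single_le_sum hterm hu
    _ = ∑ v ∈ s, lam v * b v := by simp only [mul_sub, Finset.sum_sub_distrib, hbal y, sub_zero]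
    _ ≤ r := hsum

lemma IsDroplet.exists_weightedWidthLE_image_add {D : Set Site} (hD : IsDroplet ↑s D)
    (hbal : ∀ x : Site, ∑ u ∈ s, lam u * ip x u = 0) :
    ∃ r, ∀ v : Site, WeightedWidthLE s lam ((fun z => z + v) '' D) r := by
  obtain ⟨-, a, rfl⟩ := hD
  refine ⟨∑ u ∈ s, lam u * ip (a u) u, fun v => ⟨fun u => ip (a u) u + ip v u, ?_, ?_⟩⟩
  · rintro u hu _ ⟨z, hz, rfl⟩
    have hz := mem_iInter₂.1 hz u hu
    rw [mem_ofPred_eq, ip_sub] at hz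
    rw [ip_add]
    linarith
  · simp only [mul_add, Finset.sum_add_distrib, hbal v, add_zero, le_refl]

lemma weightedWidthLE_of_isMinDroplet_union (hunit : ∀ u ∈ s, unitVec u)
    (hlam : ∀ u ∈ s, 0 ≤ lam u) (hbal : ∀ x : Site, ∑ u ∈ s, lam u * ip x u = 0)
    {E₁ E₂ D : Set Site} {r₁ r₂ g : ℝ} (h₁ : WeightedWidthLE s lam E₁ r₁)
    (h₂ : WeightedWidthLE s lam E₂ r₂) {q₁ q₂ : Site} (hq₁ : q₁ ∈ E₁) (hq₂ : q₂ ∈ E₂)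
    (hq : dist2 q₁ q₂ ≤ g) (hmin : IsMinDroplet ↑s (E₁ ∪ E₂) D) :
    WeightedWidthLE s lam D (r₁ + r₂ + (g + 1) * ∑ u ∈ s, lam u) := by
  obtain ⟨b₁, hb₁, hr₁⟩ := h₁
  obtain ⟨b₂, hb₂, hr₂⟩ := h₂
  refine ⟨fun u => max (b₁ u) (b₂ u) + 1, hmin.ip_le_add_one hunit ⟨q₁, .inl hq₁⟩ ?_, ?_⟩
  · rintro u hu x (hx | hx)
    · exact (hb₁ u hu x hx).trans (le_max_left _ _)
    · exact (hb₂ u hu x hx).trans (le_max_right _ _)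
  -- in each direction, `E₂` sticks out of `E₁` by at most `b₂ u - ⟨q₂, u⟩ + g`
  have hmax : ∀ u ∈ s, max (b₁ u) (b₂ u) ≤ b₁ u + b₂ u - ip q₂ u + g := by
    intro u hu
    have hgap := ip_sub_ip_le_dist2 (hunit u hu) q₂ q₁
    rw [dist2_comm] at hgap
    have := hb₁ u hu q₁ hq₁
    have := hb₂ u hu q₂ hq₂
    have := (dist2_nonneg q₁ q₂).trans hq
    exact max_le (by linarith) (by linarith)
  calc ∑ u ∈ s, lam u * (max (b₁ u) (b₂ u) + 1)
      ≤ ∑ u ∈ s, lam u * (b₁ u + b₂ u - ip q₂ u + (g + 1)) :=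
        Finset.sum_le_sum fun u hu =>
          mul_le_mul_of_nonneg_left (by linarith [hmax u hu]) (hlam u hu)
    _ = ∑ u ∈ s, lam u * b₁ u + ∑ u ∈ s, lam u * b₂ u + (g + 1) * ∑ u ∈ s, lam u := by
        simp only [mul_add, mul_sub, Finset.sum_add_distrib, Finset.sum_sub_distrib, hbal q₂,
          ← Finset.sum_mul]
        ring
    _ ≤ r₁ + r₂ + (g + 1) * ∑ u ∈ s, lam u := by linarith

lemma exists_labels_of_merge {α : Type*} {P : α → ℕ → Prop} {W : Multiset (α × ℕ)}
    {a₁ a₂ a' : α} {rest : Multiset α} (hW : W.map Prod.fst = a₁ ::ₘ a₂ ::ₘ rest)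
    (hP : ∀ w ∈ W, P w.1 w.2) (hmerge : ∀ n₁ n₂, P a₁ n₁ → P a₂ n₂ → P a' (n₁ + n₂)) :
    ∃ W' : Multiset (α × ℕ), W'.map Prod.fst = a' ::ₘ rest ∧
      (W'.map Prod.snd).sum = (W.map Prod.snd).sum ∧ ∀ w ∈ W', P w.1 w.2 := by
  classical
  obtain ⟨w₁, hw₁, rfl, hW₁⟩ := (Multiset.map_eq_cons _ _ _ _).2 hW
  obtain ⟨w₂, hw₂, rfl, hW₂⟩ := (Multiset.map_eq_cons _ _ _ _).2 hW₁
  have hsplit : W = w₁ ::ₘ w₂ ::ₘ (W.erase w₁).erase w₂ := by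
    rw [Multiset.cons_erase hw₂, Multiset.cons_erase hw₁]
  refine ⟨(a', w₁.2 + w₂.2) ::ₘ (W.erase w₁).erase w₂, by rw [Multiset.map_cons, hW₂], ?_, ?_⟩
  · conv_rhs => rw [hsplit]
    simp [add_assoc]
  · intro w hw
    rcases Multiset.mem_cons.1 hw with rfl | hw
    · exact hmerge _ _ (hP w₁ hw₁) (hP w₂ (Multiset.mem_of_mem_erase hw₂))
    · exact hP w (Multiset.mem_of_mem_erase (Multiset.mem_of_mem_erase hw))

/-- The label of a droplet counts the translates of `D̂` merged into it. -/
def LabelledWidthBound (s : Finset (ℝ × ℝ)) (lam : ℝ × ℝ → ℝ) (C G : ℝ) (k : ℕ)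
    (M : Multiset (Set Site)) : Prop :=
  ∃ W : Multiset (Set Site × ℕ), W.map Prod.fst = M ∧ (W.map Prod.snd).sum = k ∧
    ∀ w ∈ W, w.1.Nonempty ∧ WeightedWidthLE s lam w.1 (C * w.2 - G)

lemma labelledWidthBound_translates {Dhat : Set Site} (hne : Dhat.Nonempty) {C G : ℝ}
    (h : ∀ v : Site, WeightedWidthLE s lam ((fun z => z + v) '' Dhat) (C - G)) (c : List Site) :
    LabelledWidthBound s lam C G c.length ↑(c.map fun v => (fun z => z + v) '' Dhat) := by
  refine ⟨↑(c.map fun v => ((fun z => z + v) '' Dhat, 1)), ?_, ?_, ?_⟩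
  · simp [List.map_map, Function.comp_def]
  · simp [Function.comp_def]
  · intro w hw
    obtain ⟨v, -, rfl⟩ := List.mem_map.1 (Multiset.mem_coe.1 hw)
    exact ⟨hne.image _, by simpa using h v⟩

lemma CoverStep.labelledWidthBound (hunit : ∀ u ∈ s, unitVec u) (hlam : ∀ u ∈ s, 0 ≤ lam u)
    (hbal : ∀ x : Site, ∑ u ∈ s, lam u * ip x u = 0) {κ d : ℝ} (hκ : 0 ≤ κ) (hd : 0 ≤ d)
    {Dhat : Set Site} (hDhat : ∀ v : Site, ∀ z ∈ (fun z => z + v) '' Dhat,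
      ∀ z' ∈ (fun z => z + v) '' Dhat, dist2 z z' ≤ d)
    {C G : ℝ} (hG : (d + 2 * κ + 1) * ∑ u ∈ s, lam u ≤ G) {k : ℕ} {M M' : Multiset (Set Site)}
    (hstep : CoverStep (↑s) κ Dhat M M') (h : LabelledWidthBound s lam C G k M) :
    LabelledWidthBound s lam C G k M' := by
  obtain ⟨rest, D₁, D₂, D', x, hconn, hmin⟩ := hstep
  obtain ⟨W, hW, hsum, hwidth⟩ := h
  have hmerge : ∀ n₁ n₂ : ℕ, (D₁.Nonempty ∧ WeightedWidthLE s lam D₁ (C * n₁ - G)) →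
      (D₂.Nonempty ∧ WeightedWidthLE s lam D₂ (C * n₂ - G)) →
      D'.Nonempty ∧ WeightedWidthLE s lam D' (C * ↑(n₁ + n₂) - G) := by
    rintro n₁ n₂ ⟨⟨p₁, hp₁⟩, h₁⟩ ⟨⟨p₂, hp₂⟩, h₂⟩
    obtain ⟨q₁, hq₁, q₂, hq₂, hq⟩ := exists_dist2_le_of_conn_union hκ hd (hDhat x) hconn hp₁ hp₂
    refine ⟨hmin.1.1, (weightedWidthLE_of_isMinDroplet_union hunit hlam hbal h₁ h₂ hq₁ hq₂ hq
      hmin).mono ?_⟩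
    push_cast
    linarith
  obtain ⟨W', hW', hsum', hwidth'⟩ := exists_labels_of_merge
    (P := fun E n => E.Nonempty ∧ WeightedWidthLE s lam E (C * n - G)) hW hwidth hmerge
  exact ⟨W', hW', hsum'.trans hsum, hwidth'⟩

lemma LabelledWidthBound.weightedWidthLE_of_singleton {C G : ℝ} {k : ℕ} {D : Set Site}
    (h : LabelledWidthBound s lam C G k {D}) : WeightedWidthLE s lam D (C * k - G) := by
  obtain ⟨W, hW, hsum, hwidth⟩ := h
  obtain ⟨w, rfl, rfl⟩ := Multiset.map_eq_singleton.1 hW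
  simp only [Multiset.map_singleton, Multiset.sum_singleton] at hsum
  simpa [hsum] using (hwidth w (Multiset.mem_singleton_self w)).2

lemma IsAlphaCover.exists_clusters {κ : ℝ} {a : ℕ} {SB : Set (ℝ × ℝ)} {Dhat K : Set Site}
    {𝒟 : Multiset (Set Site)} (h : IsAlphaCover κ a SB Dhat K 𝒟) :
    ∃ T : Finset (Finset Site), (∀ B ∈ T, IsCluster κ a B ∧ ↑B ⊆ K) ∧
      (∀ B₁ ∈ T, ∀ B₂ ∈ T, B₁ ≠ B₂ → Disjoint B₁ B₂) ∧
      ∃ c : List Site, c.length = T.card ∧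
        Relation.ReflTransGen (CoverStep SB κ Dhat)
          ↑(c.map fun v => (fun z => z + v) '' Dhat) 𝒟 := by
  classical
  obtain ⟨B, c, hlen, hB, hdisj, hmax, -, hsteps⟩ := h
  -- otherwise `∅` would be an `a`-cluster disjoint from all the chosen ones
  have ha : a ≠ 0 := by
    rintro rfl
    obtain ⟨Bi, -, hBi⟩ := hmax ∅ ⟨Finset.card_empty, by simp [Conn]⟩ (by simp)
    exact hBi (Finset.disjoint_empty_left Bi)
  have hnodup : B.Nodup := hdisj.imp_of_mem fun hB₁ _ hd heq => by
    subst heq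
    rw [Finset.disjoint_self_iff_empty] at hd
    exact ha (by rw [← (hB _ hB₁).1.1, hd, Finset.card_empty])
  refine ⟨B.toFinset, fun Bi hBi => hB Bi (List.mem_toFinset.1 hBi),
    fun B₁ h₁ B₂ h₂ hne => ?_, c, by rw [List.toFinset_card_of_nodup hnodup, hlen], hsteps⟩
  exact hdisj.forall (List.mem_toFinset.1 h₁) (List.mem_toFinset.1 h₂) hne

lemma IsAlphaCover.exists_clusters_weightedWidthLE (hunit : ∀ u ∈ s, unitVec u)
    (hlam : ∀ u ∈ s, 1 ≤ lam u) (hbal : ∀ x : Site, ∑ u ∈ s, lam u * ip x u = 0) {δ : ℝ}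
    (hδ : 0 < δ) (hδs : ∀ x y : Site, ∃ u ∈ s, δ * dist2 x y ≤ ip x u - ip y u)
    {κ : ℝ} (hκ : 0 ≤ κ) {Dhat : Set Site} (hne : Dhat.Nonempty) {r₀ G : ℝ}
    (hr₀ : ∀ v : Site, WeightedWidthLE s lam ((fun z => z + v) '' Dhat) r₀)
    (hG : (r₀ / δ + 2 * κ + 1) * ∑ u ∈ s, lam u ≤ G) {a : ℕ} {K D : Set Site}
    (hcov : IsAlphaCover κ a ↑s Dhat K {D}) :
    ∃ T : Finset (Finset Site), (∀ B ∈ T, IsCluster κ a B ∧ ↑B ⊆ K) ∧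
      (∀ B₁ ∈ T, ∀ B₂ ∈ T, B₁ ≠ B₂ → Disjoint B₁ B₂) ∧
      WeightedWidthLE s lam D ((r₀ + G) * T.card - G) := by
  have hdiam : ∀ v : Site, ∀ z ∈ (fun z => z + v) '' Dhat, ∀ z' ∈ (fun z => z + v) '' Dhat,
      dist2 z z' ≤ r₀ / δ := fun v _ hz _ hz' => (hr₀ v).dist2_le_div hδ hδs hlam hbal hz hz'
  have hlam₀ : ∀ u ∈ s, 0 ≤ lam u := fun u hu => zero_le_one.trans (hlam u hu)
  have hd : 0 ≤ r₀ / δ := div_nonneg ((hr₀ 0).nonneg hlam₀ hbal (hne.image _)) hδ.le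
  obtain ⟨T, hT, hdisj, c, hc, hsteps⟩ := hcov.exists_clusters
  refine ⟨T, hT, hdisj, ?_⟩
  rw [← hc]
  refine LabelledWidthBound.weightedWidthLE_of_singleton ?_
  generalize ({D} : Multiset (Set Site)) = 𝒟 at hsteps ⊢
  induction hsteps with
  | refl => exact labelledWidthBound_translates hne (by simpa using hr₀) c
  | tail _ hstep ih => exact hstep.labelledWidthBound hunit hlam₀ hbal hκ hd hdiam hG ih

lemma IsDroplet.exists_pos_mul_diam2_le_of_isAlphaCover (hunit : ∀ u ∈ s, unitVec u)
    (hlam : ∀ u ∈ s, 1 ≤ lam u) (hbal : ∀ x : Site, ∑ u ∈ s, lam u * ip x u = 0) {δ : ℝ}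
    (hδ : 0 < δ) (hδs : ∀ x y : Site, ∃ u ∈ s, δ * dist2 x y ≤ ip x u - ip y u)
    {κ : ℝ} (hκ : 0 ≤ κ) {Dhat : Set Site} (hDhat : IsDroplet ↑s Dhat) :
    ∃ c > 0, ∀ (a : ℕ) (K D : Set Site), IsAlphaCover κ a ↑s Dhat K {D} →
      ∃ T : Finset (Finset Site), (∀ B ∈ T, IsCluster κ a B ∧ ↑B ⊆ K) ∧
        (∀ B₁ ∈ T, ∀ B₂ ∈ T, B₁ ≠ B₂ → Disjoint B₁ B₂) ∧ c * diam2 D ≤ T.card := by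
  obtain ⟨r₀, hr₀⟩ := hDhat.exists_weightedWidthLE_image_add hbal
  have hr₀_nonneg : 0 ≤ r₀ :=
    (hr₀ 0).nonneg (fun u hu => zero_le_one.trans (hlam u hu)) hbal (hDhat.1.image _)
  obtain ⟨u₀, hu₀, -⟩ := hδs 0 0
  set G := (r₀ / δ + 2 * κ + 1) * ∑ u ∈ s, lam u
  have hG : 0 < G := mul_pos (by linarith [div_nonneg hr₀_nonneg hδ.le])
    (Finset.sum_pos (fun u hu => one_pos.trans_le (hlam u hu)) ⟨u₀, hu₀⟩)
  refine ⟨δ / (r₀ + G), div_pos hδ (by linarith), fun a K D hcov => ?_⟩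
  obtain ⟨T, hT, hdisj, hwidth⟩ := hcov.exists_clusters_weightedWidthLE hunit hlam hbal hδ hδs hκ
    hDhat.1 hr₀ le_rfl
  refine ⟨T, hT, hdisj, ?_⟩
  have hdiamD : diam2 D ≤ (r₀ + G) * T.card / δ :=
    diam2_le (by positivity) fun x hx y hy =>
      (hwidth.mono (by linarith)).dist2_le_div hδ hδs hlam hbal hx hy
  calc δ / (r₀ + G) * diam2 D ≤ δ / (r₀ + G) * ((r₀ + G) * T.card / δ) := by gcongr
    _ = T.card := by field_simp

end Widths

lemma rho_nonneg (U : Finset (Finset Site)) (SB : Set (ℝ × ℝ)) (a : ℕ) : 0 ≤ rho U SB a := by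
  apply Real.sSup_nonneg
  rintro d ⟨u, -, Z, -, y, -, rfl⟩
  apply Real.sInf_nonneg
  rintro r ⟨z, -, rfl⟩
  exact Real.sqrt_nonneg _

lemma nu_nonneg (U : Finset (Finset Site)) : 0 ≤ nu U := by
  apply Real.sSup_nonneg
  rintro d ⟨X, -, x, -, y, -, rfl⟩
  exact Real.sqrt_nonneg _

lemma kappaB_nonneg (U : Finset (Finset Site)) (SB : Set (ℝ × ℝ)) (a : ℕ) :
    0 ≤ kappaB U SB a :=
  mul_nonneg zero_le_two (add_nonneg (rho_nonneg U SB a) (nu_nonneg U))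

theorem extremal_alphaCovered_general
    (U : Finset (Finset Site))
    (a : ℕ)
    (SB : Set (ℝ × ℝ)) (hSB : ValidSB U a SB) :
    ∃ R₀ : ℝ, ∀ Dhat : Set Site, IsDroplet SB Dhat →
      {x : Site | dist2 x 0 ≤ R₀} ⊆ Dhat →
      ∃ c : ℝ, 0 < c ∧ ∀ A D : Set Site, IsDroplet SB D →
        AlphaCovered (kappaB U SB a) a SB Dhat A D →
        ∃ T : Finset (Finset Site),
          (∀ B ∈ T, IsCluster (kappaB U SB a) a B ∧ ↑B ⊆ D ∩ A) ∧
          (∀ B₁ ∈ T, ∀ B₂ ∈ T, B₁ ≠ B₂ → Disjoint B₁ B₂) ∧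
          c * diam2 D ≤ (T.card : ℝ) := by
  obtain ⟨hfin, hstable, -, hsemi⟩ := hSB
  obtain ⟨s, rfl⟩ := hfin.exists_finset_coe
  obtain ⟨δ, hδ, hδs⟩ := exists_pos_mul_dist2_le_ip_sub hsemi
  obtain ⟨lam, hlam, hbal⟩ := exists_one_le_sum_mul_ip_eq_zero hsemi
  refine ⟨0, fun Dhat hDhat _ => ?_⟩
  obtain ⟨c, hc, hcover⟩ := hDhat.exists_pos_mul_diam2_le_of_isAlphaCover
    (fun u hu => (hstable hu).1) hlam hbal hδ hδs (kappaB_nonneg U (↑s) a)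
  exact ⟨c, hc, fun A D _ hcov => hcover a (D ∩ A) D hcov⟩

/-- **Extremal lemma for `α`-covered droplets (Lemma 5.4).**  For a balanced critical
family and a sufficiently large droplet `D̂`, there is a constant `c > 0` such that if a
droplet `D` is `α`-covered with respect to `A`, then `D ∩ A` contains at least
`c · diam D` pairwise disjoint `α`-clusters. -/
theorem extremal_alphaCovered
    (U : Finset (Finset Site)) (hU : ∀ X ∈ U, (0 : Site) ∉ X)
    (hcrit : Critical U) (hbal : BalancedCond U)
    (a : ℕ) (ha : famDifficulty U = (a : ℕ∞))
    (SB : Set (ℝ × ℝ)) (hSB : ValidSB U a SB) :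
    ∃ R₀ : ℝ, ∀ Dhat : Set Site, IsDroplet SB Dhat →
      {x : Site | dist2 x 0 ≤ R₀} ⊆ Dhat →
      ∃ c : ℝ, 0 < c ∧ ∀ A D : Set Site, IsDroplet SB D →
        AlphaCovered (kappaB U SB a) a SB Dhat A D →
        ∃ T : Finset (Finset Site),
          (∀ B ∈ T, IsCluster (kappaB U SB a) a B ∧ ↑B ⊆ D ∩ A) ∧
          (∀ B₁ ∈ T, ∀ B₂ ∈ T, B₁ ≠ B₂ → Disjoint B₁ B₂) ∧
          c * diam2 D ≤ (T.card : ℝ) :=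
  extremal_alphaCovered_general U a SB hSB

end BP
end
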